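/- For all positive numbers a, b, c with b > a, there exist continuous functions h₁(a,b,c;·,·,·) : [0,a) × [0,∞) × [0,c) → [0,∞) (Case I) and h₂(a,b,c;·,·,·) : [0,a) × [0,b−a) × [0,c) → [0,∞) (Case II), with h₁(a,b,c;0,0,0) = h₂(a,b,c;0,0,0) = 0, satisfying the following. Let δ₁, δ₂, η be positive numbers with 0 < a − δ₁ < a < b (and in Case II additionally a < b − δ₂ < b) and 0 < c − η < c; let R₁ ∈ [a − δ₁, a], R₂ ∈ [b, b + δ₂] (Case I) or R₂ ∈ [b − δ₂, b] (Case II), and R̃₁, R̃₂ ∈ [c − η, c]. Write e(φ) = (cos φ, sin φ) ∈ ℝ². Suppose θ ∈ [−π/2, π/2] satisfies (R̃₁ e(π/2 + θ) − R̃₂ e(π/2 − θ)) · (R₁ e(π/2 + θ) − R₂ e(π/2 − θ)) = 0. Then −π/2 < θ < π/2, R̃₁ ≥ R̃₂, and max{ |(0,a) − R₁ e(π/2+θ)|, |(0,b) − R₂ e(π/2−θ)|, |(0,c) − R̃₁ e(π/2+θ)|, |(0,c) − R̃₂ e(π/2−θ)| } ≤ h_i(a,b,c; δ₁, δ₂,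 η), with i = 1 in Case I and i = 2 in Case II. -/

import Mathlib

/-!
Writing `s = sin θ`, the orthogonality condition expands to
`2 s² (R̃₁ R₂ + R̃₂ R₁) = (R̃₁ - R̃₂) (R₂ - R₁)`. As `R₁ < R₂` this forces `R̃₂ ≤ R̃₁`
and `s² < 1/2`, so `θ ≠ ±π/2`, and, since `R̃₁ - R̃₂ ≤ η`, it gives `s² = O(η)`.
Each distance is `√((x - R)² + 2 x R (1 - cos θ))` with `0 ≤ 1 - cos θ ≤ s²`, hence at most
`√(δ₁² + δ₂² + η² + 2 M² s²)` for a bound `M` on all the radii involved.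
-/

open MeasureTheory Set Filter
open scoped NNReal ENNReal Topology

noncomputable section


/-- the planar unit vector `e(φ) = (cos φ, sin φ)`. -/
def e2 (φ : ℝ) : ℝ × ℝ := (Real.cos φ, Real.sin φ)

/-- the Euclidean dot product on the plane. -/
def dot2 (u v : ℝ × ℝ) : ℝ := u.1 * v.1 + u.2 * v.2

/-- the Euclidean norm on the plane. -/
def nrm2 (u : ℝ × ℝ) : ℝ := Real.sqrt (u.1 ^ 2 + u.2 ^ 2)

/-- the bounding property of the function `h₁` in Lemma 5.4 (Case I). -/
def SelBoundI (a b c : ℝ) (h : ℝ × ℝ × ℝ → ℝ) : Prop :=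
  ∀ δ₁ δ₂ η R₁ R₂ Rt₁ Rt₂ θ : ℝ,
    0 < δ₁ → δ₁ < a → 0 < δ₂ → 0 < η → η < c →
    R₁ ∈ Icc (a - δ₁) a → R₂ ∈ Icc b (b + δ₂) →
    Rt₁ ∈ Icc (c - η) c → Rt₂ ∈ Icc (c - η) c →
    θ ∈ Icc (-(Real.pi / 2)) (Real.pi / 2) →
    dot2 (Rt₁ • e2 (Real.pi / 2 + θ) - Rt₂ • e2 (Real.pi / 2 - θ))
      (R₁ • e2 (Real.pi / 2 + θ) - R₂ • e2 (Real.pi / 2 - θ)) = 0 →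
    -(Real.pi / 2) < θ ∧ θ < Real.pi / 2 ∧ Rt₂ ≤ Rt₁ ∧
      nrm2 (((0:ℝ), a) - R₁ • e2 (Real.pi / 2 + θ)) ≤ h (δ₁, δ₂, η) ∧
      nrm2 (((0:ℝ), b) - R₂ • e2 (Real.pi / 2 - θ)) ≤ h (δ₁, δ₂, η) ∧
      nrm2 (((0:ℝ), c) - Rt₁ • e2 (Real.pi / 2 + θ)) ≤ h (δ₁, δ₂, η) ∧
      nrm2 (((0:ℝ), c) - Rt₂ • e2 (Real.pi / 2 - θ)) ≤ h (δ₁, δ₂, η)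

/-- the bounding property of the function `h₂` in Lemma 5.4 (Case II). -/
def SelBoundII (a b c : ℝ) (h : ℝ × ℝ × ℝ → ℝ) : Prop :=
  ∀ δ₁ δ₂ η R₁ R₂ Rt₁ Rt₂ θ : ℝ,
    0 < δ₁ → δ₁ < a → 0 < δ₂ → δ₂ < b - a → 0 < η → η < c →
    R₁ ∈ Icc (a - δ₁) a → R₂ ∈ Icc (b - δ₂) b →
    Rt₁ ∈ Icc (c - η) c → Rt₂ ∈ Icc (c - η) c →
    θ ∈ Icc (-(Real.pi / 2)) (Real.pi / 2) →
    dot2 (Rt₁ • e2 (Real.pi / 2 + θ) - Rt₂ • e2 (Real.pi / 2 - θ))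
      (R₁ • e2 (Real.pi / 2 + θ) - R₂ • e2 (Real.pi / 2 - θ)) = 0 →
    -(Real.pi / 2) < θ ∧ θ < Real.pi / 2 ∧ Rt₂ ≤ Rt₁ ∧
      nrm2 (((0:ℝ), a) - R₁ • e2 (Real.pi / 2 + θ)) ≤ h (δ₁, δ₂, η) ∧
      nrm2 (((0:ℝ), b) - R₂ • e2 (Real.pi / 2 - θ)) ≤ h (δ₁, δ₂, η) ∧
      nrm2 (((0:ℝ), c) - Rt₁ • e2 (Real.pi / 2 + θ)) ≤ h (δ₁, δ₂, η) ∧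
      nrm2 (((0:ℝ), c) - Rt₂ • e2 (Real.pi / 2 - θ)) ≤ h (δ₁, δ₂, η)

open Real

lemma dot2_sub_smul_e2_eq (R₁ R₂ Rt₁ Rt₂ θ : ℝ) :
    dot2 (Rt₁ • e2 (π / 2 + θ) - Rt₂ • e2 (π / 2 - θ))
      (R₁ • e2 (π / 2 + θ) - R₂ • e2 (π / 2 - θ)) =
      2 * sin θ ^ 2 * (Rt₁ * R₂ + Rt₂ * R₁) - (Rt₁ - Rt₂) * (R₂ - R₁) := by
  simp only [dot2, e2, add_comm (π / 2), sin_add_pi_div_two, cos_add_pi_div_two,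
    sin_pi_div_two_sub, cos_pi_div_two_sub, Prod.smul_mk, smul_eq_mul, Prod.mk_sub_mk]
  linear_combination (Rt₁ - Rt₂) * (R₁ - R₂) * cos_sq_add_sin_sq θ

lemma neg_pi_div_two_lt_and_lt_pi_div_two_of_sin_sq_lt_one {θ : ℝ}
    (hθ : θ ∈ Icc (-(π / 2)) (π / 2)) (hsin : sin θ ^ 2 < 1) :
    -(π / 2) < θ ∧ θ < π / 2 := by
  refine ⟨hθ.1.lt_of_ne ?_, hθ.2.lt_of_ne ?_⟩ <;> rintro rfl <;> simp at hsin

lemma nrm2_sub_smul_e2_le (x R φ : ℝ) (hxR : 0 ≤ x * R) (hφ : 0 ≤ sin φ) :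
    nrm2 ((0, x) - R • e2 φ) ≤ √((x - R) ^ 2 + 2 * (x * R) * cos φ ^ 2) := by
  unfold nrm2 e2
  apply sqrt_le_sqrt
  simp only [Prod.smul_mk, smul_eq_mul, Prod.mk_sub_mk]
  have hexpand : (0 - R * cos φ) ^ 2 + (x - R * sin φ) ^ 2 =
      (x - R) ^ 2 + 2 * (x * R) * cos φ ^ 2 - 2 * (x * R) * sin φ * (1 - sin φ) := by
    linear_combination (R ^ 2 - 2 * x * R) * sin_sq_add_cos_sq φ
  rw [hexpand]
  nlinarith [mul_nonneg (mul_nonneg hxR hφ) (sub_nonneg.2 (sin_le_one φ))]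

lemma nrm2_sub_smul_e2_le_of_cos_sq_le {x R φ D M S : ℝ} (hx : 0 ≤ x) (hR : 0 ≤ R)
    (hxM : x ≤ M) (hRM : R ≤ M) (hD : (x - R) ^ 2 ≤ D) (hS : cos φ ^ 2 ≤ S)
    (hφ : 0 ≤ sin φ) :
    nrm2 ((0, x) - R • e2 φ) ≤ √(D + 2 * M ^ 2 * S) := by
  refine (nrm2_sub_smul_e2_le x R φ (mul_nonneg hx hR) hφ).trans (sqrt_le_sqrt ?_)
  have hxR : x * R ≤ M ^ 2 := by nlinarith
  nlinarith [mul_le_mul hxR hS (sq_nonneg _) (sq_nonneg M),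
    mul_nonneg (mul_nonneg hx hR) (sq_nonneg (cos φ))]

theorem selection_bound {a b c δ₁ δ₂ η R₁ R₂ Rt₁ Rt₂ θ M L ρ : ℝ}
    (hR₁ : R₁ ∈ Icc (a - δ₁) a) (hδ₁ : δ₁ < a) (hR₁₂ : R₁ < R₂)
    (hb : 0 ≤ b) (hbR₂ : (b - R₂) ^ 2 ≤ δ₂ ^ 2)
    (hRt₁ : Rt₁ ∈ Icc (c - η) c) (hRt₂ : Rt₂ ∈ Icc (c - η) c) (hη : η < c)
    (haM : a ≤ M) (hbM : b ≤ M) (hR₂M : R₂ ≤ M) (hcM : c ≤ M)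
    (hL : R₂ - R₁ ≤ L) (hρ : 0 < ρ) (hρR : ρ ≤ R₁ + R₂)
    (hθ : θ ∈ Icc (-(π / 2)) (π / 2))
    (horth : dot2 (Rt₁ • e2 (π / 2 + θ) - Rt₂ • e2 (π / 2 - θ))
      (R₁ • e2 (π / 2 + θ) - R₂ • e2 (π / 2 - θ)) = 0) :
    let B := √(δ₁ ^ 2 + δ₂ ^ 2 + η ^ 2 + 2 * M ^ 2 * (η * L / (2 * (c - η) * ρ)))
    (-(π / 2) < θ ∧ θ < π / 2 ∧ Rt₂ ≤ Rt₁ ∧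
      nrm2 (((0:ℝ), a) - R₁ • e2 (π / 2 + θ)) ≤ B ∧
      nrm2 (((0:ℝ), b) - R₂ • e2 (π / 2 - θ)) ≤ B ∧
      nrm2 (((0:ℝ), c) - Rt₁ • e2 (π / 2 + θ)) ≤ B ∧
      nrm2 (((0:ℝ), c) - Rt₂ • e2 (π / 2 - θ)) ≤ B) := by
  intro B
  rw [dot2_sub_smul_e2_eq, sub_eq_zero] at horth
  obtain ⟨hR₁lo, hR₁hi⟩ := hR₁
  obtain ⟨hRt₁lo, hRt₁hi⟩ := hRt₁
  obtain ⟨hRt₂lo, hRt₂hi⟩ := hRt₂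
  have hR₁pos : 0 < R₁ := by linarith
  have hRt₁pos : 0 < Rt₁ := by linarith
  have hRt₂pos : 0 < Rt₂ := by linarith
  have hR₂pos : 0 < R₂ := hR₁pos.trans hR₁₂
  have hden_pos : 0 < Rt₁ * R₂ + Rt₂ * R₁ := by positivity
  have hRt : Rt₂ ≤ Rt₁ :=
    sub_nonneg.1 <| nonneg_of_mul_nonneg_left (horth ▸ by positivity) (sub_pos.2 hR₁₂)
  have hsin_lt : sin θ ^ 2 < 1 := by
    nlinarith [mul_pos hRt₁pos hR₁pos, mul_pos hRt₂pos hR₂pos]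
  have hsin : sin θ ^ 2 ≤ η * L / (2 * (c - η) * ρ) := by
    have hden : (c - η) * ρ ≤ Rt₁ * R₂ + Rt₂ * R₁ := calc
      (c - η) * ρ ≤ (c - η) * (R₁ + R₂) := mul_le_mul_of_nonneg_left hρR (by linarith)
      _ = (c - η) * R₂ + (c - η) * R₁ := by ring
      _ ≤ Rt₁ * R₂ + Rt₂ * R₁ := by gcongr
    rw [le_div_iff₀ (by have := sub_pos.2 hη; positivity)]
    calc sin θ ^ 2 * (2 * (c - η) * ρ) = 2 * sin θ ^ 2 * ((c - η) * ρ) := by ring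
      _ ≤ 2 * sin θ ^ 2 * (Rt₁ * R₂ + Rt₂ * R₁) := by gcongr
      _ = (Rt₁ - Rt₂) * (R₂ - R₁) := horth
      _ ≤ η * L := mul_le_mul (by linarith) hL (by linarith) (by linarith)
  have hDa : (a - R₁) ^ 2 ≤ δ₁ ^ 2 := pow_le_pow_left₀ (by linarith) (by linarith) 2
  have hDc₁ : (c - Rt₁) ^ 2 ≤ η ^ 2 := pow_le_pow_left₀ (by linarith) (by linarith) 2
  have hDc₂ : (c - Rt₂) ^ 2 ≤ η ^ 2 := pow_le_pow_left₀ (by linarith) (by linarith) 2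
  have hcos : 0 ≤ cos θ := cos_nonneg_of_mem_Icc hθ
  have hsin_add : sin (π / 2 + θ) = cos θ := by rw [add_comm, sin_add_pi_div_two]
  have hcos_add : cos (π / 2 + θ) ^ 2 = sin θ ^ 2 := by
    rw [add_comm, cos_add_pi_div_two, neg_sq]
  have hcos_sub : cos (π / 2 - θ) ^ 2 = sin θ ^ 2 := by rw [cos_pi_div_two_sub]
  obtain ⟨hθlo, hθhi⟩ := neg_pi_div_two_lt_and_lt_pi_div_two_of_sin_sq_lt_one hθ hsin_lt
  refine ⟨hθlo, hθhi, hRt, ?_, ?_, ?_, ?_⟩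
  · exact nrm2_sub_smul_e2_le_of_cos_sq_le (by linarith) hR₁pos.le haM (by linarith)
      (by linarith [sq_nonneg δ₂, sq_nonneg η]) (hcos_add.trans_le hsin) (hsin_add ▸ hcos)
  · exact nrm2_sub_smul_e2_le_of_cos_sq_le hb (by linarith) hbM hR₂M
      (by linarith [sq_nonneg δ₁, sq_nonneg η]) (hcos_sub.trans_le hsin)
      ((sin_pi_div_two_sub θ).symm ▸ hcos)
  · exact nrm2_sub_smul_e2_le_of_cos_sq_le (by linarith) hRt₁pos.le hcM (by linarith)
      (by linarith [sq_nonneg δ₁, sq_nonneg δ₂]) (hcos_add.trans_le hsin) (hsin_add ▸ hcos)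
  · exact nrm2_sub_smul_e2_le_of_cos_sq_le (by linarith) hRt₂pos.le hcM (by linarith)
      (by linarith [sq_nonneg δ₁, sq_nonneg δ₂]) (hcos_sub.trans_le hsin)
      ((sin_pi_div_two_sub θ).symm ▸ hcos)

/- In both cases `M = b + c (+ δ₂)` bounds every radius, the second factor of the numerator
bounds `R₂ - R₁`, and the denominator bounds `2 (R̃₁ R₂ + R̃₂ R₁)` from below. -/
def boundI (a b c : ℝ) (d : ℝ × ℝ × ℝ) : ℝ :=
  √(d.1 ^ 2 + d.2.1 ^ 2 + d.2.2 ^ 2 + 2 * (b + c + d.2.1) ^ 2 *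
    (d.2.2 * (b + d.2.1 - (a - d.1)) / (2 * (c - d.2.2) * (a - d.1 + b))))

def boundII (a b c : ℝ) (d : ℝ × ℝ × ℝ) : ℝ :=
  √(d.1 ^ 2 + d.2.1 ^ 2 + d.2.2 ^ 2 + 2 * (b + c) ^ 2 *
    (d.2.2 * (b - (a - d.1)) / (2 * (c - d.2.2) * (a - d.1 + (b - d.2.1)))))

section

variable {a b c : ℝ}

lemma continuousOn_boundI (hab : a < b) :
    ContinuousOn (boundI a b c) (Ico 0 a ×ˢ (Ici 0 ×ˢ Ico 0 c)) := by
  refine continuous_sqrt.comp_continuousOn (.add (by fun_prop) (.mul (by fun_prop)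
    (.div (by fun_prop) (by fun_prop) ?_)))
  rintro ⟨δ₁, δ₂, η⟩ hd
  simp only [mem_prod, mem_Ico, mem_Ici] at hd
  obtain ⟨⟨hδ₁, hδ₁a⟩, -, -, hη⟩ := hd
  have : 0 < c - η := sub_pos.2 hη
  have : 0 < a - δ₁ + b := by linarith
  positivity

lemma continuousOn_boundII :
    ContinuousOn (boundII a b c) (Ico 0 a ×ˢ (Ico 0 (b - a) ×ˢ Ico 0 c)) := by
  refine continuous_sqrt.comp_continuousOn (.add (by fun_prop) (.mul (by fun_prop)
    (.div (by fun_prop) (by fun_prop) ?_)))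
  rintro ⟨δ₁, δ₂, η⟩ hd
  simp only [mem_prod, mem_Ico] at hd
  obtain ⟨⟨hδ₁, hδ₁a⟩, ⟨-, hδ₂b⟩, -, hη⟩ := hd
  have : 0 < c - η := sub_pos.2 hη
  have : 0 < a - δ₁ + (b - δ₂) := by linarith
  positivity

lemma selBoundI_boundI (hab : a < b) : SelBoundI a b c (boundI a b c) := by
  intro δ₁ δ₂ η R₁ R₂ Rt₁ Rt₂ θ hδ₁ hδ₁a hδ₂ hη hηc hR₁ hR₂ hRt₁ hRt₂ hθ horth
  exact selection_bound hR₁ hδ₁a (by linarith [hR₁.2, hR₂.1]) (by linarith)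
    (sq_le_sq' (by linarith [hR₂.2]) (by linarith [hR₂.1])) hRt₁ hRt₂ hηc
    (by linarith) (by linarith) (by linarith [hR₂.2]) (by linarith) (by linarith [hR₁.1, hR₂.2])
    (by linarith) (by linarith [hR₁.1, hR₂.1]) hθ horth

lemma selBoundII_boundII : SelBoundII a b c (boundII a b c) := by
  intro δ₁ δ₂ η R₁ R₂ Rt₁ Rt₂ θ hδ₁ hδ₁a hδ₂ hδ₂b hη hηc hR₁ hR₂ hRt₁ hRt₂ hθ horth
  exact selection_bound (δ₂ := δ₂) hR₁ hδ₁a (by linarith [hR₁.2, hR₂.1]) (by linarith)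
    (sq_le_sq' (by linarith [hR₂.2]) (by linarith [hR₂.1])) hRt₁ hRt₂ hηc
    (by linarith) (by linarith) (by linarith [hR₂.2]) (by linarith) (by linarith [hR₁.1, hR₂.2])
    (by linarith) (by linarith [hR₁.1, hR₂.1]) hθ horth

end

theorem stmt_16_general (a b c : ℝ) (hab : a < b) :
    ∃ h₁ h₂ : ℝ × ℝ × ℝ → ℝ,
      ContinuousOn h₁ (Ico 0 a ×ˢ (Ici 0 ×ˢ Ico 0 c)) ∧
      (∀ d ∈ Ico 0 a ×ˢ (Ici 0 ×ˢ Ico 0 c), 0 ≤ h₁ d) ∧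
      h₁ (0, 0, 0) = 0 ∧ SelBoundI a b c h₁ ∧
      ContinuousOn h₂ (Ico 0 a ×ˢ (Ico 0 (b - a) ×ˢ Ico 0 c)) ∧
      (∀ d ∈ Ico 0 a ×ˢ (Ico 0 (b - a) ×ˢ Ico 0 c), 0 ≤ h₂ d) ∧
      h₂ (0, 0, 0) = 0 ∧ SelBoundII a b c h₂ :=
  ⟨boundI a b c, boundII a b c, continuousOn_boundI hab, fun _ _ => sqrt_nonneg _,
    by simp [boundI], selBoundI_boundI hab, continuousOn_boundII,
    fun _ _ => sqrt_nonneg _, by simp [boundII], selBoundII_boundII⟩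

/-- Lemma 5.4 (two-dimensional selection of approximate collinear rank-one
connections), Cases I and II. -/
theorem stmt_16 (a b c : ℝ) (ha : 0 < a) (hb : 0 < b) (hc : 0 < c) (hab : a < b) :
    ∃ h₁ h₂ : ℝ × ℝ × ℝ → ℝ,
      ContinuousOn h₁ (Ico 0 a ×ˢ (Ici 0 ×ˢ Ico 0 c)) ∧
      (∀ d ∈ Ico 0 a ×ˢ (Ici 0 ×ˢ Ico 0 c), 0 ≤ h₁ d) ∧
      h₁ (0, 0, 0) = 0 ∧ SelBoundI a b c h₁ ∧
      ContinuousOn h₂ (Ico 0 a ×ˢ (Ico 0 (b - a) ×ˢ Ico 0 c)) ∧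
      (∀ d ∈ Ico 0 a ×ˢ (Ico 0 (b - a) ×ˢ Ico 0 c), 0 ≤ h₂ d) ∧
      h₂ (0, 0, 0) = 0 ∧ SelBoundII a b c h₂ :=
  stmt_16_general a b c hab
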